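/- Let μ_L, μ_I, τ_L > 0 and R₀ > 0 be fixed, and let 0 < τ_I < τ_I'. If α > 0 satisfies α = (R₀/μ_I)(1 + α τ_L² μ_L)^(−1/τ_L²)(1 − (1 + α τ_I² μ_I)^(−1/τ_I²)) and α' > 0 satisfies the same equation with τ_I replaced by τ_I', then α' < α. In words: the initial exponential growth rate is strictly decreasing in the coefficient of variation τ_I of the infectious period — a more random infectious period decreases the growth rate. -/

import Mathlib

/-!
With `L` the Laplace transform of a Gamma distribution, dividing the equation for `α` by `α`
gives `1 = (R₀ / μ_I) · L_L(α) · (1 - L_I(α)) / α`. The right-hand side is nonincreasing in `α`: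
`L_L` decreases, and `(1 - L_I(α)) / α` is a secant slope through the origin of the concave
function `1 - L_I`, which vanishes at `0`. It is strictly decreasing in `τ_I`, because
`(1 + y s) ^ (1 / s)` decreases in `s` by Bernoulli's inequality. So `α ≤ α'` would give `1 < 1`.
-/

open Real Set

theorem convexOn_rpow_of_nonpos {p : ℝ} (hp : p ≤ 0) :
    ConvexOn ℝ (Ioi 0) fun x : ℝ ↦ x ^ p := by
  refine ⟨convex_Ioi 0, fun x (hx : 0 < x) y (hy : 0 < y) a b ha hb hab ↦ ?_⟩
  simp only [smul_eq_mul]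
  calc (a * x + b * y) ^ p ≤ (x ^ a * y ^ b) ^ p :=
        rpow_le_rpow_of_nonpos (by positivity)
          (geom_mean_le_arith_mean2_weighted ha hb hx.le hy.le hab) hp
    _ = (x ^ p) ^ a * (y ^ p) ^ b := by
        rw [mul_rpow (by positivity) (by positivity), ← rpow_mul hx.le, ← rpow_mul hy.le,
          ← rpow_mul hx.le, ← rpow_mul hy.le, mul_comm a, mul_comm b]
    _ ≤ a * x ^ p + b * y ^ p :=
        geom_mean_le_arith_mean2_weighted ha hb (by positivity) (by positivity) hab

theorem one_sub_one_add_mul_rpow_div_le_of_le {b p x y : ℝ} (hb : 0 < b) (hp : p ≤ 0) (hx : 0 < x)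
    (hxy : x ≤ y) : (1 - (1 + b * y) ^ p) / y ≤ (1 - (1 + b * x) ^ p) / x := by
  have hy : 0 < y := hx.trans_le hxy
  have hsec := (convexOn_rpow_of_nonpos hp).secant_mono (a := 1) (x := 1 + b * x)
    (y := 1 + b * y) (mem_Ioi.2 one_pos) (mem_Ioi.2 (by positivity)) (mem_Ioi.2 (by positivity))
    (by simp [hb.ne', hx.ne']) (by simp [hb.ne', hy.ne']) (by gcongr)
  simp only [one_rpow, add_sub_cancel_left] at hsec
  rw [div_le_div_iff₀ hy hx]
  rw [div_le_div_iff₀ (by positivity) (by positivity)] at hsec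
  nlinarith

theorem one_add_mul_rpow_neg_inv_lt {y s t : ℝ} (hy : 0 < y) (hs : 0 < s) (hst : s < t) :
    (1 + y * s) ^ (-(1 / s)) < (1 + y * t) ^ (-(1 / t)) := by
  have ht : 0 < t := hs.trans hst
  have hbernoulli : 1 + y * t < (1 + y * s) ^ (t / s) := by
    have := one_add_mul_self_lt_rpow_one_add (s := y * s) (by nlinarith) (by positivity)
      ((one_lt_div hs).2 hst)
    rwa [show t / s * (y * s) = y * t by field_simp] at this
  calc (1 + y * s) ^ (-(1 / s)) = ((1 + y * s) ^ (t / s)) ^ (-(1 / t)) := by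
        rw [← rpow_mul (by positivity)]
        field_simp
    _ < (1 + y * t) ^ (-(1 / t)) :=
        rpow_lt_rpow_of_neg (by positivity) hbernoulli (by simpa using ht)

/-- The Laplace transform `x ↦ 𝔼[exp (-x T)]` of a Gamma distributed `T` with mean `μ` and
coefficient of variation `τ`, i.e. with shape `τ⁻²` and scale `τ² μ`. -/
noncomputable def gammaLaplace (μ τ x : ℝ) : ℝ := (1 + x * τ ^ 2 * μ) ^ (-(1 / τ ^ 2))

section gammaLaplace

variable {μ τ x y : ℝ}

@[simp]
theorem gammaLaplace_zero : gammaLaplace μ τ 0 = 1 := by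
  simp [gammaLaplace]

theorem gammaLaplace_pos (hμ : 0 ≤ μ) (hx : 0 ≤ x) : 0 < gammaLaplace μ τ x :=
  rpow_pos_of_pos (by positivity) _

theorem gammaLaplace_le_gammaLaplace_of_le (hμ : 0 ≤ μ) (hx : 0 ≤ x) (hxy : x ≤ y) :
    gammaLaplace μ τ y ≤ gammaLaplace μ τ x :=
  rpow_le_rpow_of_nonpos (by positivity) (by gcongr) (by simp only [neg_nonpos]; positivity)

theorem gammaLaplace_le_one (hμ : 0 ≤ μ) (hx : 0 ≤ x) : gammaLaplace μ τ x ≤ 1 := by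
  simpa using gammaLaplace_le_gammaLaplace_of_le (τ := τ) hμ le_rfl hx

theorem gammaLaplace_lt_gammaLaplace_of_cv_lt {τ' : ℝ} (hμ : 0 < μ) (hx : 0 < x) (hτ : 0 < τ)
    (hττ' : τ < τ') : gammaLaplace μ τ x < gammaLaplace μ τ' x := by
  have := one_add_mul_rpow_neg_inv_lt (mul_pos hx hμ) (pow_pos hτ 2)
    (pow_lt_pow_left₀ hττ' hτ.le two_ne_zero)
  simpa only [gammaLaplace, mul_right_comm x μ] using this

theorem one_sub_gammaLaplace_div_le_of_le (hμ : 0 < μ) (hτ : τ ≠ 0) (hx : 0 < x) (hxy : x ≤ y) :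
    (1 - gammaLaplace μ τ y) / y ≤ (1 - gammaLaplace μ τ x) / x := by
  have := one_sub_one_add_mul_rpow_div_le_of_le (b := τ ^ 2 * μ) (p := -(1 / τ ^ 2)) (by positivity)
    (by simp only [neg_nonpos]; positivity) hx hxy
  simpa only [gammaLaplace, mul_assoc, mul_comm x, mul_comm y] using this

end gammaLaplace

theorem growth_rate_decreasing_in_cv_infectious_general (μL μI τL R₀ τI τI' α α' : ℝ)
    (hμL : 0 < μL) (hμI : 0 < μI) (hR₀ : 0 < R₀)
    (hτI : 0 < τI) (hτI' : τI < τI') (hα : 0 < α) (hα' : 0 < α')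
    (hbal : α = (R₀ / μI) * (1 + α * τL ^ 2 * μL) ^ (-(1 / τL ^ 2) : ℝ)
        * (1 - (1 + α * τI ^ 2 * μI) ^ (-(1 / τI ^ 2) : ℝ)))
    (hbal' : α' = (R₀ / μI) * (1 + α' * τL ^ 2 * μL) ^ (-(1 / τL ^ 2) : ℝ)
        * (1 - (1 + α' * τI' ^ 2 * μI) ^ (-(1 / τI' ^ 2) : ℝ))) :
    α' < α := by
  by_contra! hle
  change α = R₀ / μI * gammaLaplace μL τL α * (1 - gammaLaplace μI τI α) at hbal
  change α' = R₀ / μI * gammaLaplace μL τL α' * (1 - gammaLaplace μI τI' α') at hbal'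
  have hLα' := gammaLaplace_pos (τ := τL) hμL.le hα'.le
  have hslope_nonneg : 0 ≤ (1 - gammaLaplace μI τI α') / α' :=
    div_nonneg (sub_nonneg.2 (gammaLaplace_le_one hμI.le hα'.le)) hα'.le
  have hLα := gammaLaplace_pos (τ := τL) hμL.le hα.le
  refine lt_irrefl (1 : ℝ) ?_
  calc (1 : ℝ) = R₀ / μI * gammaLaplace μL τL α' * ((1 - gammaLaplace μI τI' α') / α') := by
        rw [← mul_div_assoc, ← hbal', div_self hα'.ne']
    _ < R₀ / μI * gammaLaplace μL τL α' * ((1 - gammaLaplace μI τI α') / α') := by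
        gcongr
        exact gammaLaplace_lt_gammaLaplace_of_cv_lt hμI hα' hτI hτI'
    _ ≤ R₀ / μI * gammaLaplace μL τL α * ((1 - gammaLaplace μI τI α') / α') := by
        gcongr
        exact gammaLaplace_le_gammaLaplace_of_le hμL.le hα.le hle
    _ ≤ R₀ / μI * gammaLaplace μL τL α * ((1 - gammaLaplace μI τI α) / α) := by
        gcongr R₀ / μI * gammaLaplace μL τL α * ?_
        exact one_sub_gammaLaplace_div_le_of_le hμI hτI.ne' hα hle
    _ = 1 := by
        rw [← mul_div_assoc, ← hbal, div_self hα.ne']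

/-- The initial exponential growth rate `α` is strictly decreasing in the coefficient of
variation `τ_I` of the infectious period. -/
theorem growth_rate_decreasing_in_cv_infectious (μL μI τL R₀ τI τI' α α' : ℝ)
    (hμL : 0 < μL) (hμI : 0 < μI) (hτL : 0 < τL) (hR₀ : 0 < R₀)
    (hτI : 0 < τI) (hτI' : τI < τI') (hα : 0 < α) (hα' : 0 < α')
    (hbal : α = (R₀ / μI) * (1 + α * τL ^ 2 * μL) ^ (-(1 / τL ^ 2) : ℝ)
        * (1 - (1 + α * τI ^ 2 * μI) ^ (-(1 / τI ^ 2) : ℝ)))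
    (hbal' : α' = (R₀ / μI) * (1 + α' * τL ^ 2 * μL) ^ (-(1 / τL ^ 2) : ℝ)
        * (1 - (1 + α' * τI' ^ 2 * μI) ^ (-(1 / τI' ^ 2) : ℝ))) :
    α' < α :=
  growth_rate_decreasing_in_cv_infectious_general μL μI τL R₀ τI τI' α α' hμL hμI hR₀ hτI hτI' hα
    hα' hbal hbal'
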